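/- arXiv:2010.02738 — 3 statements merged into one kernel-verified Lean document; each statement's English description precedes it below -/
import Mathlib

section
/- Let f : ℝ^n → ℝ be differentiable with μ-strongly monotone gradient for some μ > 0 (i.e. ⟨∇f(x₁) − ∇f(x₂), x₁ − x₂⟩ ≥ μ‖x₁ − x₂‖² for all x₁, x₂), let A ∈ ℝ^{m×n} and b ∈ ℝ^m. If x₁, x₂ : ℝ_{≥0} → ℝ^n are differentiable solutions of the gradient dynamics ẋ(t) = −∇f(x(t)) − Aᵀ(Ax(t) − b), then for all t ≥ 0, ‖x₁(t) − x₂(t)‖ ≤ e^{−μt} ‖x₁(0) − x₂(0)‖. In particular, the equilibrium of this dynamics is globally exponentially stable. -/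
/-!
Along two solutions the difference `y = x₁ - x₂` satisfies `⟪ẏ, y⟫ ≤ -μ‖y‖²`: strong monotonicity
of `∇f` contributes `-μ‖y‖²` and the penalty contributes `-‖A y‖² ≤ 0`. Hence
`t ↦ e^{2μt} ‖y t‖²` has nonpositive derivative, so it is antitone on `[0, ∞)`.
-/

open Matrix Set Real

open scoped RealInnerProductSpace

section Contraction

variable {E : Type*} [NormedAddCommGroup E] [InnerProductSpace ℝ E]
  {y y' : ℝ → E} {μ : ℝ}

theorem antitoneOn_exp_mul_norm_sq_of_inner_deriv_le
    (hy : ∀ t, 0 ≤ t → HasDerivAt y (y' t) t)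
    (hdecay : ∀ t, 0 ≤ t → ⟪y' t, y t⟫ ≤ -μ * ‖y t‖ ^ 2) :
    AntitoneOn (fun t => exp (2 * μ * t) * ‖y t‖ ^ 2) (Ici 0) := by
  have hderiv : ∀ t, 0 ≤ t → HasDerivAt (fun t => exp (2 * μ * t) * ‖y t‖ ^ 2)
      (exp (2 * μ * t) * (2 * μ) * ‖y t‖ ^ 2 + exp (2 * μ * t) * (2 * ⟪y t, y' t⟫)) t := by
    intro t ht
    have hexp : HasDerivAt (fun t => exp (2 * μ * t)) (exp (2 * μ * t) * (2 * μ)) t := by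
      simpa using ((hasDerivAt_id t).const_mul (2 * μ)).exp
    exact hexp.mul (hy t ht).norm_sq
  refine antitoneOn_of_hasDerivWithinAt_nonpos (convex_Ici 0)
    (fun t ht => (hderiv t ht).continuousAt.continuousWithinAt)
    (fun t ht => (hderiv t (interior_subset ht)).hasDerivWithinAt) fun t ht => ?_
  have ht : 0 ≤ t := interior_subset ht
  have hdecay_t := hdecay t ht
  rw [real_inner_comm] at hdecay_t
  nlinarith [exp_pos (2 * μ * t)]

theorem norm_le_exp_mul_norm_of_inner_deriv_le
    (hy : ∀ t, 0 ≤ t → HasDerivAt y (y' t) t)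
    (hdecay : ∀ t, 0 ≤ t → ⟪y' t, y t⟫ ≤ -μ * ‖y t‖ ^ 2) {t : ℝ} (ht : 0 ≤ t) :
    ‖y t‖ ≤ exp (-μ * t) * ‖y 0‖ := by
  have hanti : exp (2 * μ * t) * ‖y t‖ ^ 2 ≤ ‖y 0‖ ^ 2 := by
    simpa using antitoneOn_exp_mul_norm_sq_of_inner_deriv_le hy hdecay self_mem_Ici ht ht
  have hsq : ‖y t‖ ^ 2 ≤ (exp (-μ * t) * ‖y 0‖) ^ 2 := by
    have hexp : exp (-μ * t) ^ 2 * exp (2 * μ * t) = 1 := by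
      rw [← exp_nat_mul, ← exp_add]; ring_nf; exact exp_zero
    nlinarith [exp_pos (2 * μ * t)]
  exact pow_le_pow_iff_left₀ (norm_nonneg _) (by positivity) two_ne_zero |>.mp hsq

end Contraction

section PenalizedFlow

variable {ι κ : Type*} [Fintype ι] [DecidableEq ι] [Fintype κ] [DecidableEq κ]

theorem inner_toEuclideanLin_transpose (A : Matrix κ ι ℝ) (u : EuclideanSpace ℝ κ)
    (w : EuclideanSpace ℝ ι) :
    ⟪toEuclideanLin Aᵀ u, w⟫ = ⟪u, toEuclideanLin A w⟫ := by
  rw [← A.conjTranspose_eq_transpose_of_trivial, toEuclideanLin_conjTranspose_eq_adjoint,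
    LinearMap.adjoint_inner_left]

/-- The vector field `x ↦ -F x - Aᵀ (A x - b)`; with `F = ∇f` it is the gradient dynamics of `f`
with the penalty `‖A x - b‖² / 2`. -/
noncomputable def penalizedFlow (F : EuclideanSpace ℝ ι → EuclideanSpace ℝ ι) (A : Matrix κ ι ℝ)
    (b : EuclideanSpace ℝ κ) (x : EuclideanSpace ℝ ι) : EuclideanSpace ℝ ι :=
  -F x - toEuclideanLin Aᵀ (toEuclideanLin A x - b)

theorem inner_penalizedFlow_sub_le {F : EuclideanSpace ℝ ι → EuclideanSpace ℝ ι} {μ : ℝ}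
    (hmono : ∀ x₁ x₂, μ * ‖x₁ - x₂‖ ^ 2 ≤ ⟪F x₁ - F x₂, x₁ - x₂⟫)
    (A : Matrix κ ι ℝ) (b : EuclideanSpace ℝ κ) (x₁ x₂ : EuclideanSpace ℝ ι) :
    ⟪penalizedFlow F A b x₁ - penalizedFlow F A b x₂, x₁ - x₂⟫ ≤ -μ * ‖x₁ - x₂‖ ^ 2 := by
  have hsplit : penalizedFlow F A b x₁ - penalizedFlow F A b x₂ =
      -(F x₁ - F x₂) - toEuclideanLin Aᵀ (toEuclideanLin A (x₁ - x₂)) := by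
    simp only [penalizedFlow, map_sub]
    abel
  have hpenalty : 0 ≤ ⟪toEuclideanLin Aᵀ (toEuclideanLin A (x₁ - x₂)), x₁ - x₂⟫ := by
    rw [inner_toEuclideanLin_transpose]
    exact real_inner_self_nonneg
  rw [hsplit, inner_sub_left, inner_neg_left]
  linarith [hmono x₁ x₂]

end PenalizedFlow

theorem statement_2_general {n m : ℕ} (f : EuclideanSpace ℝ (Fin n) → ℝ)
    (μ : ℝ)
    (hmono : ∀ x₁ x₂ : EuclideanSpace ℝ (Fin n),
      μ * ‖x₁ - x₂‖ ^ 2 ≤ (inner ℝ (gradient f x₁ - gradient f x₂) (x₁ - x₂) : ℝ))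
    (A : Matrix (Fin m) (Fin n) ℝ) (b : EuclideanSpace ℝ (Fin m))
    (x₁ x₂ : ℝ → EuclideanSpace ℝ (Fin n))
    (h₁ : ∀ t, 0 ≤ t → HasDerivAt x₁
      (-gradient f (x₁ t) - Matrix.toEuclideanLin Aᵀ (Matrix.toEuclideanLin A (x₁ t) - b)) t)
    (h₂ : ∀ t, 0 ≤ t → HasDerivAt x₂
      (-gradient f (x₂ t) - Matrix.toEuclideanLin Aᵀ (Matrix.toEuclideanLin A (x₂ t) - b)) t) :
    ∀ t, 0 ≤ t → ‖x₁ t - x₂ t‖ ≤ Real.exp (-μ * t) * ‖x₁ 0 - x₂ 0‖ := fun _ ht =>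
  norm_le_exp_mul_norm_of_inner_deriv_le (y := fun t => x₁ t - x₂ t)
    (y' := fun t => penalizedFlow (gradient f) A b (x₁ t) - penalizedFlow (gradient f) A b (x₂ t))
    (fun s hs => (h₁ s hs).sub (h₂ s hs))
    (fun s _ => inner_penalizedFlow_sub_le hmono A b (x₁ s) (x₂ s)) ht

/-- if `∇f` is `μ`-strongly monotone (`μ > 0`), then any two solutions of the
gradient dynamics `ẋ = −∇f(x) − Aᵀ(Ax − b)` contract at rate `e^{−μt}`; in particular the
equilibrium of this dynamics is globally exponentially stable. -/
theorem statement_2 {n m : ℕ} (f : EuclideanSpace ℝ (Fin n) → ℝ)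
    (hdiff : Differentiable ℝ f) (μ : ℝ) (hμ : 0 < μ)
    (hmono : ∀ x₁ x₂ : EuclideanSpace ℝ (Fin n),
      μ * ‖x₁ - x₂‖ ^ 2 ≤ (inner ℝ (gradient f x₁ - gradient f x₂) (x₁ - x₂) : ℝ))
    (A : Matrix (Fin m) (Fin n) ℝ) (b : EuclideanSpace ℝ (Fin m))
    (x₁ x₂ : ℝ → EuclideanSpace ℝ (Fin n))
    (h₁ : ∀ t, 0 ≤ t → HasDerivAt x₁
      (-gradient f (x₁ t) - Matrix.toEuclideanLin Aᵀ (Matrix.toEuclideanLin A (x₁ t) - b)) t)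
    (h₂ : ∀ t, 0 ≤ t → HasDerivAt x₂
      (-gradient f (x₂ t) - Matrix.toEuclideanLin Aᵀ (Matrix.toEuclideanLin A (x₂ t) - b)) t) :
    ∀ t, 0 ≤ t → ‖x₁ t - x₂ t‖ ≤ Real.exp (-μ * t) * ‖x₁ 0 - x₂ 0‖ :=
  statement_2_general f μ hmono A b x₁ x₂ h₁ h₂
end

section
/- Let H be a symmetric positive definite n×n real matrix, let A be a real m×n matrix of full row rank m, let q₁ > 0 and k > 0, and suppose AAᵀ ⪰ q₁ I_m. If the matrix 2kH − 2AᵀA − q₁ I_n − H Aᵀ(AAᵀ)^{−1} A H is positive semidefinite, then the symmetric block matrix [[2kH − 2AᵀA, H Aᵀ], [A H, 2AAᵀ]] satisfies [[2kH − 2AᵀA, H Aᵀ], [A H, 2AAᵀ]] ⪰ q₁ I_{n+m} in the Loewner order. -/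
/-!
After subtracting `q₁ I`, the block matrix is the sum of `fromBlocks S 0 0 (AAᵀ - q₁ I)`, where `S`
is the matrix assumed positive semidefinite, and `fromBlocks (HAᵀ(AAᵀ)⁻¹AH) (HAᵀ) (AH) (AAᵀ)`.
The first summand is positive semidefinite blockwise; the second one is positive semidefinite
because its Schur complement with respect to the positive definite block `AAᵀ` vanishes.
-/

open Matrix

namespace Matrix

variable {l m : Type*}

theorem PosSemidef.fromBlocks_zero [Fintype l] [Fintype m] {R : Type*} [Ring R] [PartialOrder R]
    [StarRing R] [StarOrderedRing R] {X : Matrix l l R} {Y : Matrix m m R}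
    (hX : X.PosSemidef) (hY : Y.PosSemidef) : (fromBlocks X 0 0 Y).PosSemidef := by
  refine .of_dotProduct_mulVec_nonneg ?_ fun x => ?_
  · simp [IsHermitian, fromBlocks_conjTranspose, hX.1.eq, hY.1.eq]
  · have hsplit : star x = star (x ∘ Sum.inl) ⊕ᵥ star (x ∘ Sum.inr) :=
      (Sum.elim_comp_inl_inr _).symm
    rw [fromBlocks_mulVec, hsplit, sumElim_dotProduct_sumElim]
    simpa using add_nonneg (hX.dotProduct_mulVec_nonneg (x ∘ Sum.inl))
      (hY.dotProduct_mulVec_nonneg (x ∘ Sum.inr))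

theorem PosDef.posSemidef_fromBlocks_schur [Fintype l] [Fintype m] [DecidableEq m] {K : Type*}
    [Field K] [PartialOrder K] [StarRing K] [StarOrderedRing K] (B : Matrix l m K)
    {D : Matrix m m K} (hD : D.PosDef) : (fromBlocks (B * D⁻¹ * Bᴴ) B Bᴴ D).PosSemidef := by
  have := hD.isUnit.invertible
  exact (PosDef.fromBlocks₂₂ _ B hD).2 (by simpa using PosSemidef.zero)

open scoped ComplexOrder in
theorem PosDef.of_posSemidef_sub_smul_one [DecidableEq m] {𝕜 : Type*} [RCLike 𝕜]
    {M : Matrix m m 𝕜} {q : ℝ} (hq : 0 < q) (hM : (M - q • 1).PosSemidef) : M.PosDef := by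
  simpa using PosDef.posSemidef_add hM (PosDef.one.smul hq)

theorem fromBlocks_sub_smul_one [DecidableEq l] [DecidableEq m] {R : Type*} [Ring R]
    (P : Matrix l l R) (B : Matrix l m R) (C : Matrix m l R) (D : Matrix m m R) (q : R) :
    fromBlocks P B C D - q • 1 = fromBlocks (P - q • 1) B C (D - q • 1) := by
  rw [← fromBlocks_one, fromBlocks_smul, sub_eq_add_neg, fromBlocks_neg, fromBlocks_add]
  simp [sub_eq_add_neg]

end Matrix

theorem statement_4_general {n m : ℕ} (H : Matrix (Fin n) (Fin n) ℝ) (hH : H.PosDef)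
    (A : Matrix (Fin m) (Fin n) ℝ)
    (q₁ k : ℝ) (hq₁ : 0 < q₁)
    (hAA : (A * Aᵀ - q₁ • 1).PosSemidef)
    (hschur : ((2 * k) • H - (2 : ℝ) • (Aᵀ * A) - q₁ • 1
        - H * Aᵀ * (A * Aᵀ)⁻¹ * A * H).PosSemidef) :
    (Matrix.fromBlocks ((2 * k) • H - (2 : ℝ) • (Aᵀ * A)) (H * Aᵀ)
        (A * H) ((2 : ℝ) • (A * Aᵀ)) - q₁ • 1).PosSemidef := by
  have hAH : (H * Aᵀ)ᴴ = A * H := by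
    rw [conjTranspose_mul, hH.1.eq, conjTranspose_eq_transpose_of_trivial, transpose_transpose]
  have hAAt : (A * Aᵀ).PosDef := PosDef.of_posSemidef_sub_smul_one hq₁ hAA
  have hcoupled := hAAt.posSemidef_fromBlocks_schur (H * Aᵀ)
  rw [hAH] at hcoupled
  convert (hschur.fromBlocks_zero hAA).add hcoupled using 1
  rw [fromBlocks_sub_smul_one, fromBlocks_add]
  congr 1
  · simp [Matrix.mul_assoc]
  · rw [zero_add]
  · rw [zero_add]
  · rw [two_smul]; abel

/-- if `H ≻ 0`, `A` has full row rank, `AAᵀ ⪰ q₁I` and the Schur complement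
`2kH − 2AᵀA − q₁I − HAᵀ(AAᵀ)⁻¹AH` is positive semidefinite, then the symmetric block matrix
`[[2kH − 2AᵀA, HAᵀ], [AH, 2AAᵀ]]` dominates `q₁ I_{n+m}` in the Loewner order. -/
theorem statement_4 {n m : ℕ} (H : Matrix (Fin n) (Fin n) ℝ) (hH : H.PosDef)
    (A : Matrix (Fin m) (Fin n) ℝ) (hrank : A.rank = m)
    (q₁ k : ℝ) (hq₁ : 0 < q₁) (hk : 0 < k)
    (hAA : (A * Aᵀ - q₁ • 1).PosSemidef)
    (hschur : ((2 * k) • H - (2 : ℝ) • (Aᵀ * A) - q₁ • 1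
        - H * Aᵀ * (A * Aᵀ)⁻¹ * A * H).PosSemidef) :
    (Matrix.fromBlocks ((2 * k) • H - (2 : ℝ) • (Aᵀ * A)) (H * Aᵀ)
        (A * H) ((2 : ℝ) • (A * Aᵀ)) - q₁ • 1).PosSemidef :=
  statement_4_general H hH A q₁ k hq₁ hAA hschur
end

section
/- Let Ω = ℝ^n × ℝ_{≥0}^m and let P_Ω(x,λ) = (x, λ⁺) be the Euclidean projection onto Ω, where λ⁺ is the componentwise positive part. Let ν > 0, 𝐋 > 0, and let F : ℝ^{n+m} → ℝ^{n+m} be ν-strongly monotone on Ω (⟨F(z₁) − F(z₂), z₁ − z₂⟩ ≥ ν‖z₁ − z₂‖² for all z₁, z₂ ∈ Ω) and 𝐋-Lipschitz continuous on Ω. Let α, β > 0 with α < 4ν/𝐋², and let z* ∈ Ω satisfy P_Ω(z* − αF(z*)) = z*. If z : ℝ_{≥0} → ℝ^{n+m} is differentiable, z(t) ∈ Ω for all t ≥ 0, and z solves the projected dynamics ż(t) = β( P_Ω(z(t) − αF(z(t))) − z(t) ), then for all t ≥ 0, ‖z(t) − z*‖ ≤ ‖z(0) − z*‖ · e^{−αβ(4ν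 − α𝐋²)t/8}. In particular, z* is globally exponentially stable. -/
/-!
The Lyapunov function `V(t) = ‖z(t) − z*‖²` decays exponentially. Writing `w = P_Ω(z − αF z)`,
`d = w − z` and `e = z − z*`, adding the variational inequalities of the projection at
`z − αF z` (tested against `z*`) and at `z* − αF z*` (tested against `w`, using `P_Ω(z* − αF z*) = z*`)
gives `⟪d + α(F z − F z*), d + e⟫ ≤ 0`. Strong monotonicity and the Lipschitz bound then turn this
into `⟪d, e⟫ ≤ −(α(4ν − α𝐋²)/4)‖e‖²`, so `V' = 2β⟪d, e⟫ ≤ −(αβ(4ν − α𝐋²)/2) V`, and Grönwall's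
inequality concludes.
-/

open Matrix

/-- The primal-dual phase space `ℝ^n × ℝ^m` with the Euclidean (ℓ²) structure. -/
abbrev PD (n m : ℕ) := WithLp 2 (EuclideanSpace ℝ (Fin n) × EuclideanSpace ℝ (Fin m))

/-- The feasible set `Ω = ℝ^n × ℝ_{≥0}^m`. -/
def Omega (n m : ℕ) : Set (PD n m) := {z | ∀ i, 0 ≤ z.ofLp.2 i}

/-- Euclidean projection onto `Ω`: `P_Ω(x,λ) = (x, λ⁺)`. -/
noncomputable def projOmega {n m : ℕ} (z : PD n m) : PD n m :=
  WithLp.toLp 2 (z.ofLp.1, WithLp.toLp 2 (fun i => max (z.ofLp.2 i) 0))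

open scoped RealInnerProductSpace

theorem le_mul_exp_of_hasDerivAt_le_mul {f f' : ℝ → ℝ} {K : ℝ}
    (hf : ∀ t, 0 ≤ t → HasDerivAt f (f' t) t) (bound : ∀ t, 0 ≤ t → f' t ≤ K * f t)
    {t : ℝ} (ht : 0 ≤ t) : f t ≤ f 0 * Real.exp (K * t) := by
  have h := le_gronwallBound_of_liminf_deriv_right_le (f := f) (f' := f') (a := 0) (b := t)
    (δ := f 0) (K := K) (ε := 0)
    (fun s hs => (hf s hs.1).continuousAt.continuousWithinAt)
    (fun s hs _ hr => (hf s hs.1).hasDerivWithinAt.liminf_right_slope_le hr) le_rfl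
    (fun s hs => by simpa using bound s hs.1) t ⟨ht, le_rfl⟩
  rwa [gronwallBound_ε0, sub_zero] at h

section InnerProductSpace

variable {E : Type*} [NormedAddCommGroup E] [InnerProductSpace ℝ E]

theorem inner_le_of_inner_add_add_nonpos {d e g : E} {a b : ℝ}
    (h : ⟪d + g, d + e⟫ ≤ 0) (hmono : a * ‖e‖ ^ 2 ≤ ⟪g, e⟫) (hlip : ‖g‖ ≤ b * ‖e‖) :
    ⟪d, e⟫ ≤ (b ^ 2 / 4 - a) * ‖e‖ ^ 2 := by
  have hexpand : ⟪d + g, d + e⟫ = ‖d‖ ^ 2 + ⟪d, e⟫ + ⟪g, d⟫ + ⟪g, e⟫ := by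
    simp only [inner_add_left, inner_add_right, real_inner_self_eq_norm_sq]; ring
  have hcross : -(b * ‖e‖ * ‖d‖) ≤ ⟪g, d⟫ :=
    neg_le_of_abs_le <| (abs_real_inner_le_norm g d).trans <|
      mul_le_mul_of_nonneg_right hlip (norm_nonneg d)
  nlinarith [sq_nonneg (‖d‖ - b * ‖e‖ / 2)]

variable {S : Set E} {P F : E → E} {ν L α β : ℝ} {xstar : E}

theorem inner_proj_sub_le_of_isFixedPt (hα : 0 ≤ α) (hPmem : ∀ u, P u ∈ S)
    (hP : ∀ u, ∀ v ∈ S, ⟪P u - u, P u - v⟫ ≤ 0) (hxstar : xstar ∈ S)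
    (hfix : Function.IsFixedPt (fun u => P (u - α • F u)) xstar) {x : E}
    (hmono : ν * ‖x - xstar‖ ^ 2 ≤ ⟪F x - F xstar, x - xstar⟫)
    (hlip : ‖F x - F xstar‖ ≤ L * ‖x - xstar‖) :
    ⟪P (x - α • F x) - x, x - xstar⟫ ≤ -(α * (4 * ν - α * L ^ 2) / 4) * ‖x - xstar‖ ^ 2 := by
  set w := P (x - α • F x)
  have hvi : ⟪w - (x - α • F x), w - xstar⟫ ≤ 0 := hP _ _ hxstar
  have hvi_fix : ⟪α • F xstar, xstar - w⟫ ≤ 0 := by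
    simpa only [hfix.eq, sub_sub_cancel] using hP (xstar - α • F xstar) w (hPmem _)
  have hsum : ⟪(w - x) + α • (F x - F xstar), (w - x) + (x - xstar)⟫ ≤ 0 := by
    have hsplit : ⟪(w - x) + α • (F x - F xstar), (w - x) + (x - xstar)⟫
        = ⟪w - (x - α • F x), w - xstar⟫ + ⟪α • F xstar, xstar - w⟫ := by
      simp only [smul_sub, inner_sub_left, inner_sub_right, inner_add_left, inner_add_right]
      ring
    linarith
  have hbound := inner_le_of_inner_add_add_nonpos (a := α * ν) (b := α * L) hsum
    (by rw [real_inner_smul_left, mul_assoc]; exact mul_le_mul_of_nonneg_left hmono hα)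
    (by rw [norm_smul, Real.norm_of_nonneg hα, mul_assoc]
        exact mul_le_mul_of_nonneg_left hlip hα)
  linarith [show ((α * L) ^ 2 / 4 - α * ν) = -(α * (4 * ν - α * L ^ 2) / 4) by ring]

theorem norm_sub_le_mul_exp_of_projected_dynamics (hα : 0 ≤ α) (hβ : 0 ≤ β)
    (hPmem : ∀ u, P u ∈ S) (hP : ∀ u, ∀ v ∈ S, ⟪P u - u, P u - v⟫ ≤ 0)
    (hxstar : xstar ∈ S) (hfix : Function.IsFixedPt (fun u => P (u - α • F u)) xstar)
    (hmono : ∀ x ∈ S, ν * ‖x - xstar‖ ^ 2 ≤ ⟪F x - F xstar, x - xstar⟫)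
    (hlip : ∀ x ∈ S, ‖F x - F xstar‖ ≤ L * ‖x - xstar‖)
    {z : ℝ → E} (hfeas : ∀ t, 0 ≤ t → z t ∈ S)
    (hode : ∀ t, 0 ≤ t → HasDerivAt z (β • (P (z t - α • F (z t)) - z t)) t)
    {t : ℝ} (ht : 0 ≤ t) :
    ‖z t - xstar‖ ≤ ‖z 0 - xstar‖ * Real.exp (-(α * β * (4 * ν - α * L ^ 2) * t / 4)) := by
  set κ := α * β * (4 * ν - α * L ^ 2)
  have hV : ‖z t - xstar‖ ^ 2 ≤ ‖z 0 - xstar‖ ^ 2 * Real.exp (-(κ / 2) * t) := by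
    refine le_mul_exp_of_hasDerivAt_le_mul (fun s hs => ((hode s hs).sub_const xstar).norm_sq)
      (fun s hs => ?_) ht
    have key := inner_proj_sub_le_of_isFixedPt hα hPmem hP hxstar hfix
      (hmono _ (hfeas s hs)) (hlip _ (hfeas s hs))
    rw [real_inner_comm, real_inner_smul_left]
    nlinarith [mul_le_mul_of_nonneg_left key hβ]
  have hsq : ‖z 0 - xstar‖ ^ 2 * Real.exp (-(κ / 2) * t)
      = (‖z 0 - xstar‖ * Real.exp (-(κ * t / 4))) ^ 2 := by
    rw [mul_pow, ← Real.exp_nat_mul]; ring_nf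
  rw [hsq] at hV
  exact (pow_le_pow_iff_left₀ (norm_nonneg _) (by positivity) two_ne_zero).mp hV

end InnerProductSpace

theorem projOmega_mem {n m : ℕ} (u : PD n m) : projOmega u ∈ Omega n m :=
  fun _ => le_max_right _ _

theorem inner_projOmega_sub_nonpos {n m : ℕ} (u v : PD n m) (hv : v ∈ Omega n m) :
    ⟪projOmega u - u, projOmega u - v⟫ ≤ 0 := by
  rw [WithLp.prod_inner_apply]
  have hprimal : (projOmega u - u).ofLp.1 = 0 := sub_self u.ofLp.1
  rw [hprimal, inner_zero_left, zero_add, PiLp.inner_apply]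
  refine Finset.sum_nonpos fun i _ => ?_
  change (max (u.ofLp.2 i) 0 - v.ofLp.2 i) * (max (u.ofLp.2 i) 0 - u.ofLp.2 i) ≤ 0
  rcases le_or_gt 0 (u.ofLp.2 i) with h | h
  · rw [max_eq_left h, sub_self, mul_zero]
  · rw [max_eq_right h.le]
    nlinarith [hv i]

set_option maxHeartbeats 1000000 in
set_option synthInstance.maxHeartbeats 400000 in
theorem statement_6_general {n m : ℕ} (ν L α β : ℝ)
    (hα : 0 < α) (hβ : 0 < β) (hαL : α < 4 * ν / L ^ 2)
    (F : PD n m → PD n m)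
    (hmono : ∀ z₁ ∈ Omega n m, ∀ z₂ ∈ Omega n m,
      ν * ‖z₁ - z₂‖ ^ 2 ≤ (inner ℝ (F z₁ - F z₂) (z₁ - z₂) : ℝ))
    (hlip : ∀ z₁ ∈ Omega n m, ∀ z₂ ∈ Omega n m, ‖F z₁ - F z₂‖ ≤ L * ‖z₁ - z₂‖)
    (zstar : PD n m) (hzstar : zstar ∈ Omega n m)
    (hfix : projOmega (zstar - α • F zstar) = zstar)
    (z : ℝ → PD n m) (hfeas : ∀ t, 0 ≤ t → z t ∈ Omega n m)
    (hode : ∀ t, 0 ≤ t →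
      HasDerivAt z (β • (projOmega (z t - α • F (z t)) - z t)) t) :
    ∀ t, 0 ≤ t →
      ‖z t - zstar‖ ≤ ‖z 0 - zstar‖ * Real.exp (-(α * β * (4 * ν - α * L ^ 2) * t / 8)) := by
  intro t ht
  -- `4ν / 0 = 0` in Lean, so `0 < α < 4ν / L²` already forces `L ≠ 0`.
  have hL2 : 0 < L ^ 2 := by
    rcases (sq_nonneg L).lt_or_eq with h | h
    · exact h
    · rw [← h, div_zero] at hαL; linarith
  have hgap : 0 ≤ 4 * ν - α * L ^ 2 := by
    linarith [(lt_div_iff₀ hL2).mp hαL]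
  refine (norm_sub_le_mul_exp_of_projected_dynamics hα.le hβ.le projOmega_mem
    inner_projOmega_sub_nonpos hzstar hfix (fun x hx => hmono x hx zstar hzstar)
    (fun x hx => hlip x hx zstar hzstar) hfeas hode ht).trans ?_
  gcongr
  have : 0 ≤ α * β * (4 * ν - α * L ^ 2) * t := by positivity
  linarith

set_option maxHeartbeats 1000000 in
set_option synthInstance.maxHeartbeats 400000 in
/-- for a `ν`-strongly monotone and `𝐋`-Lipschitz map `F` on `Ω`, with
`0 < α < 4ν/𝐋²` and `β > 0`, every feasible solution of the projected dynamics
`ż = β(P_Ω(z − αF(z)) − z)` converges globally exponentially to the fixed point `z*`: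
`‖z(t) − z*‖ ≤ ‖z(0) − z*‖ e^{−αβ(4ν − α𝐋²)t/8}`. -/
theorem statement_6 {n m : ℕ} (ν L α β : ℝ)
    (hν : 0 < ν) (hL : 0 < L) (hα : 0 < α) (hβ : 0 < β) (hαL : α < 4 * ν / L ^ 2)
    (F : PD n m → PD n m)
    (hmono : ∀ z₁ ∈ Omega n m, ∀ z₂ ∈ Omega n m,
      ν * ‖z₁ - z₂‖ ^ 2 ≤ (inner ℝ (F z₁ - F z₂) (z₁ - z₂) : ℝ))
    (hlip : ∀ z₁ ∈ Omega n m, ∀ z₂ ∈ Omega n m, ‖F z₁ - F z₂‖ ≤ L * ‖z₁ - z₂‖)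
    (zstar : PD n m) (hzstar : zstar ∈ Omega n m)
    (hfix : projOmega (zstar - α • F zstar) = zstar)
    (z : ℝ → PD n m) (hfeas : ∀ t, 0 ≤ t → z t ∈ Omega n m)
    (hode : ∀ t, 0 ≤ t →
      HasDerivAt z (β • (projOmega (z t - α • F (z t)) - z t)) t) :
    ∀ t, 0 ≤ t →
      ‖z t - zstar‖ ≤ ‖z 0 - zstar‖ * Real.exp (-(α * β * (4 * ν - α * L ^ 2) * t / 8)) :=
  statement_6_general ν L α β hα hβ hαL F hmono hlip zstar hzstar hfix z hfeas hode
end
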